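/- arXiv:2402.07406 — 3 statements merged into one kernel-verified Lean document; each statement's English description precedes it below -/
import Mathlib

section
/- Let H_i, H_j : [0,1] → ℝ be continuously differentiable and 0 ≤ a < 1−b ≤ 1 with 0 ≤ a,b and a + b < 1. Define Δ_x := a H_x(a) + ∫_a^{1−b} H_x(v) dv + b H_x(1−b) for x ∈ {i,j}. Then ∫_a^{1−b} ∫_a^{1−b} (min(v,w) − vw) H_j'(v) H_i'(w) dv dw = a H_i(a)H_j(a) + b H_i(1−b)H_j(1−b) + ∫_a^{1−b} H_i(v)H_j(v) dv − Δ_i Δ_j. -/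
open intervalIntegral

private lemma aux_parts_id (f f' : ℝ → ℝ) (s t : ℝ)
    (hf : ∀ x ∈ Set.uIcc s t, HasDerivAt f (f' x) x)
    (hf' : IntervalIntegrable f' MeasureTheory.volume s t) :
    ∫ v in s..t, v * f' v = t * f t - s * f s - ∫ v in s..t, f v := by
  have h := intervalIntegral.integral_mul_deriv_eq_deriv_mul
    (u := fun x : ℝ => x) (u' := fun _ : ℝ => (1:ℝ)) (v := f) (v' := f')
    (fun x _ => hasDerivAt_id x) hf intervalIntegrable_const hf'
  simpa using h

private lemma aux_parts_one_sub (f f' : ℝ → ℝ) (s t : ℝ)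
    (hf : ∀ x ∈ Set.uIcc s t, HasDerivAt f (f' x) x)
    (hf' : IntervalIntegrable f' MeasureTheory.volume s t) :
    ∫ v in s..t, (1 - v) * f' v
      = (1 - t) * f t - (1 - s) * f s + ∫ v in s..t, f v := by
  have h := intervalIntegral.integral_mul_deriv_eq_deriv_mul
    (u := fun x : ℝ => 1 - x) (u' := fun _ : ℝ => (-1:ℝ)) (v := f) (v' := f')
    (fun x _ => by simpa using (hasDerivAt_id x).const_sub 1) hf
    intervalIntegrable_const hf'
  rw [h]
  have : ∫ v in s..t, (-1 : ℝ) * f v = -∫ v in s..t, f v := by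
    rw [← intervalIntegral.integral_neg]; congr 1; funext v; ring
  rw [this]; ring

theorem MTM_equal_trimming_covariance (Hi Hi' Hj Hj' : ℝ → ℝ)
    (hHi : ∀ v ∈ Set.Icc (0:ℝ) 1, HasDerivAt Hi (Hi' v) v)
    (hHi' : ContinuousOn Hi' (Set.Icc (0:ℝ) 1))
    (hHj : ∀ v ∈ Set.Icc (0:ℝ) 1, HasDerivAt Hj (Hj' v) v)
    (hHj' : ContinuousOn Hj' (Set.Icc (0:ℝ) 1))
    (a b : ℝ) (ha : 0 ≤ a) (hb : 0 ≤ b) (hab : a < 1 - b) (hb1 : 1 - b ≤ 1) :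
    ∫ w in a..(1 - b), ∫ v in a..(1 - b), (min v w - v * w) * Hj' v * Hi' w
      = a * Hi a * Hj a + b * Hi (1 - b) * Hj (1 - b)
        + (∫ v in a..(1 - b), Hi v * Hj v)
        - (a * Hi a + (∫ v in a..(1 - b), Hi v) + b * Hi (1 - b))
          * (a * Hj a + (∫ v in a..(1 - b), Hj v) + b * Hj (1 - b)) := by
  set c : ℝ := 1 - b with hc
  have hac : a ≤ c := hab.le
  have hsub : Set.Icc a c ⊆ Set.Icc (0:ℝ) 1 := Set.Icc_subset_Icc ha hb1
  have hicc : Set.uIcc a c = Set.Icc a c := Set.uIcc_of_le hac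
  have h1c : (1:ℝ) - c = b := by rw [hc]; ring
  -- continuity of Hi, Hj on [0,1]
  have hHjc : ContinuousOn Hj (Set.Icc (0:ℝ) 1) :=
    fun x hx => (hHj x hx).continuousAt.continuousWithinAt
  have hHic : ContinuousOn Hi (Set.Icc (0:ℝ) 1) :=
    fun x hx => (hHi x hx).continuousAt.continuousWithinAt
  -- clamp function
  set q : ℝ → ℝ := fun x => min (max x 0) 1 with hq
  have hqc : Continuous q := (continuous_id.max continuous_const).min continuous_const
  have hqmem : ∀ x, q x ∈ Set.Icc (0:ℝ) 1 :=
    fun x => ⟨le_min (le_max_right x 0) zero_le_one, min_le_right _ _⟩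
  have hqeq : ∀ x ∈ Set.Icc (0:ℝ) 1, q x = x := by
    intro x hx
    simp only [hq]
    rw [max_eq_left hx.1, min_eq_left hx.2]
  set J : ℝ → ℝ := fun x => Hj (q x) with hJdef
  have hJc : Continuous J := hHjc.comp_continuous hqc hqmem
  have hJeq : ∀ x ∈ Set.Icc a c, J x = Hj x := by
    intro x hx
    simp only [hJdef]
    rw [hqeq x (hsub hx)]
  set G : ℝ → ℝ := fun w => ∫ x in a..w, J x with hGdef
  have hGd : ∀ w, HasDerivAt G (J w) w := fun w =>
    intervalIntegral.integral_hasDerivAt_right (hJc.intervalIntegrable a w)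
      hJc.aestronglyMeasurable.stronglyMeasurableAtFilter hJc.continuousAt
  have hGc : Continuous G := by
    rw [continuous_iff_continuousAt]; exact fun w => (hGd w).continuousAt
  -- integral of Hj equals integral of J on subintervals of [a,c]
  have hJint : ∀ s t : ℝ, s ∈ Set.Icc a c → t ∈ Set.Icc a c →
      (∫ v in s..t, Hj v) = ∫ v in s..t, J v := by
    intro s t hs ht
    exact intervalIntegral.integral_congr
      (fun x hx => (hJeq x (Set.uIcc_subset_Icc hs ht hx)).symm)
  have hGsplit : ∀ w ∈ Set.Icc a c, (∫ v in w..c, J v) = G c - G w := by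
    intro w hw
    have : (∫ v in a..w, J v) + (∫ v in w..c, J v) = ∫ v in a..c, J v :=
      intervalIntegral.integral_add_adjacent_intervals
        (hJc.intervalIntegrable a w) (hJc.intervalIntegrable w c)
    simp only [hGdef]
    linarith
  -- integrability helpers
  have hintHj' : ∀ s t : ℝ, s ∈ Set.Icc a c → t ∈ Set.Icc a c →
      IntervalIntegrable Hj' MeasureTheory.volume s t := fun s t hs ht =>
    (hHj'.mono ((Set.uIcc_subset_Icc hs ht).trans hsub)).intervalIntegrable
  have hintHi' : IntervalIntegrable Hi' MeasureTheory.volume a c :=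
    (hHi'.mono (hicc ▸ hsub)).intervalIntegrable
  have hmemc : c ∈ Set.Icc a c := ⟨hac, le_refl c⟩
  have hmema : a ∈ Set.Icc a c := ⟨le_refl a, hac⟩
  set D : ℝ := a * Hj a + b * Hj c + G c with hD
  -- the inner integral
  have key : ∀ w ∈ Set.Icc a c,
      (∫ v in a..c, (min v w - v * w) * Hj' v * Hi' w)
        = Hi' w * (-(a * Hj a) + w * D - G w) := by
    intro w hw
    have hcmin : ∀ w' : ℝ, ContinuousOn (fun v => (min v w' - v * w') * Hj' v) (Set.Icc a c) :=
      fun w' => (((continuous_id.min continuous_const).sub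
        (continuous_id.mul continuous_const)).continuousOn).mul (hHj'.mono hsub)
    have hint1 : IntervalIntegrable (fun v => (min v w - v * w) * Hj' v)
        MeasureTheory.volume a w :=
      ((hcmin w).mono (Set.uIcc_subset_Icc hmema hw)).intervalIntegrable
    have hint2 : IntervalIntegrable (fun v => (min v w - v * w) * Hj' v)
        MeasureTheory.volume w c :=
      ((hcmin w).mono (Set.uIcc_subset_Icc hw hmemc)).intervalIntegrable
    have h1 : (∫ v in a..c, (min v w - v * w) * Hj' v * Hi' w)
        = Hi' w * ∫ v in a..c, (min v w - v * w) * Hj' v := by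
      rw [← intervalIntegral.integral_const_mul]
      congr 1; funext v; ring
    have hsplit : (∫ v in a..c, (min v w - v * w) * Hj' v)
        = (∫ v in a..w, (min v w - v * w) * Hj' v)
          + ∫ v in w..c, (min v w - v * w) * Hj' v :=
      (intervalIntegral.integral_add_adjacent_intervals hint1 hint2).symm
    have hL : (∫ v in a..w, (min v w - v * w) * Hj' v)
        = (1 - w) * (w * Hj w - a * Hj a - ∫ v in a..w, Hj v) := by
      have e : (∫ v in a..w, (min v w - v * w) * Hj' v)
          = ∫ v in a..w, (1 - w) * (v * Hj' v) := by
        refine intervalIntegral.integral_congr (fun v hv => ?_)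
        rw [Set.uIcc_of_le hw.1] at hv
        rw [min_eq_left hv.2]; ring
      rw [e, intervalIntegral.integral_const_mul,
        aux_parts_id Hj Hj' a w
          (fun x hx => hHj x (hsub (Set.uIcc_subset_Icc hmema hw hx)))
          (hintHj' a w hmema hw)]
    have hR : (∫ v in w..c, (min v w - v * w) * Hj' v)
        = w * ((1 - c) * Hj c - (1 - w) * Hj w + ∫ v in w..c, Hj v) := by
      have e : (∫ v in w..c, (min v w - v * w) * Hj' v)
          = ∫ v in w..c, w * ((1 - v) * Hj' v) := by
        refine intervalIntegral.integral_congr (fun v hv => ?_)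
        rw [Set.uIcc_of_le hw.2] at hv
        rw [min_eq_right hv.1]; ring
      rw [e, intervalIntegral.integral_const_mul,
        aux_parts_one_sub Hj Hj' w c
          (fun x hx => hHj x (hsub (Set.uIcc_subset_Icc hw hmemc hx)))
          (hintHj' w c hw hmemc)]
    rw [h1, hsplit, hL, hR, hJint a w hmema hw, hJint w c hw hmemc,
      hGsplit w hw, h1c]
    have hGw : (∫ v in a..w, J v) = G w := rfl
    rw [hGw, hD]
    ring
  -- rewrite the outer integral
  have houter : (∫ w in a..c, ∫ v in a..c, (min v w - v * w) * Hj' v * Hi' w)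
      = ∫ w in a..c, ((-(a * Hj a)) * Hi' w + D * (w * Hi' w) - G w * Hi' w) := by
    refine intervalIntegral.integral_congr (fun w hw => ?_)
    rw [hicc] at hw
    rw [key w hw]; ring
  -- integrability for splitting
  have i1 : IntervalIntegrable (fun w => (-(a * Hj a)) * Hi' w) MeasureTheory.volume a c :=
    hintHi'.const_mul _
  have i2 : IntervalIntegrable (fun w => D * (w * Hi' w)) MeasureTheory.volume a c := by
    apply IntervalIntegrable.const_mul
    exact ((continuousOn_id.mul (hHi'.mono hsub)).mono (by rw [hicc])).intervalIntegrable
  have i3 : IntervalIntegrable (fun w => G w * Hi' w) MeasureTheory.volume a c :=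
    ((hGc.continuousOn.mul (hHi'.mono hsub)).mono (by rw [hicc])).intervalIntegrable
  rw [houter, intervalIntegral.integral_sub (i1.add i2) i3,
    intervalIntegral.integral_add i1 i2,
    intervalIntegral.integral_const_mul, intervalIntegral.integral_const_mul]
  have e1 : (∫ w in a..c, Hi' w) = Hi c - Hi a :=
    intervalIntegral.integral_eq_sub_of_hasDerivAt
      (fun x hx => hHi x (hsub (hicc ▸ hx))) hintHi'
  have e2 : (∫ w in a..c, w * Hi' w) = c * Hi c - a * Hi a - ∫ w in a..c, Hi w :=
    aux_parts_id Hi Hi' a c (fun x hx => hHi x (hsub (hicc ▸ hx))) hintHi'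
  have e3 : (∫ w in a..c, G w * Hi' w)
      = G c * Hi c - G a * Hi a - ∫ w in a..c, J w * Hi w :=
    intervalIntegral.integral_mul_deriv_eq_deriv_mul
      (fun x _ => hGd x) (fun x hx => hHi x (hsub (hicc ▸ hx)))
      (hJc.intervalIntegrable a c) hintHi'
  have e4 : (∫ w in a..c, J w * Hi w) = ∫ w in a..c, Hi w * Hj w := by
    refine intervalIntegral.integral_congr (fun x hx => ?_)
    rw [hJeq x (hicc ▸ hx)]; ring
  have e5 : G c = ∫ v in a..c, Hj v := (hJint a c hmema hmemc).symm
  have e6 : G a = 0 := intervalIntegral.integral_same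
  rw [e1, e2, e3, e4, e6, e5]
  have e7 : (∫ v in a..c, Hi v * Hj v) = ∫ w in a..c, Hi w * Hj w := rfl
  rw [hD, e5]
  clear_value c
  subst hc
  ring
end

section
/- Let H : [0,1] → ℝ be continuously differentiable and 0 ≤ a < 1−b ≤ 1. Define Δ := a H(a) + ∫_a^{1−b} H(v) dv + b H(1−b). Then ∫_a^{1−b} ∫_a^{1−b} (min(v,w) − vw) H'(v) H'(w) dv dw = a H(a)² + b H(1−b)² + ∫_a^{1−b} H(v)² dv − Δ². -/
/-!
On `[a, w]` the kernel `K(v, w) = min v w - v * w` equals `(1 - w) v`, and on `[w, c]` it equals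
`w (1 - v)`; integrating by parts on each piece gives
`∫_a^c K(v, w) H'(v) dv = w Δ - a H(a) - ∫_a^w H` with `Δ = a H(a) + ∫_a^c H + (1 - c) H(c)`,
a function of `w` with derivative `Δ - H`. A second integration by parts against `H'(w)` leaves
boundary terms and `∫_a^c (Δ - H) H`, which combine to the right-hand side.
-/

open intervalIntegral

open Set

open MeasureTheory (volume)

section

variable {H H' : ℝ → ℝ} {a c : ℝ}

theorem integral_min_sub_mul_mul_deriv (hH : ∀ v ∈ Icc a c, HasDerivAt H (H' v) v)
    (hH' : ContinuousOn H' (Icc a c)) {w : ℝ} (hw : w ∈ Icc a c) :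
    ∫ v in a..c, (min v w - v * w) * H' v
      = w * (a * H a + (∫ v in a..c, H v) + (1 - c) * H c) - a * H a - ∫ v in a..w, H v := by
  obtain ⟨haw, hwc⟩ := hw
  have hleft : uIcc a w ⊆ Icc a c := by rw [uIcc_of_le haw]; exact Icc_subset_Icc_right hwc
  have hright : uIcc w c ⊆ Icc a c := by rw [uIcc_of_le hwc]; exact Icc_subset_Icc_left haw
  have hHc : ContinuousOn H (Icc a c) := HasDerivAt.continuousOn hH
  have hintegrand : ContinuousOn (fun v => (min v w - v * w) * H' v) (Icc a c) :=
    (by fun_prop : Continuous fun v : ℝ => min v w - v * w).continuousOn.mul hH'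
  have integral_left : ∫ v in a..w, (min v w - v * w) * H' v
      = (1 - w) * (w * H w - a * H a - ∫ v in a..w, H v) := by
    have parts := integral_mul_deriv_eq_deriv_mul (fun x _ => hasDerivAt_id x)
      (fun x hx => hH x (hleft hx)) intervalIntegrable_const (hH'.mono hleft).intervalIntegrable
    simp only [id, one_mul] at parts
    rw [← parts, ← integral_const_mul]
    refine integral_congr fun v hv => ?_
    rw [uIcc_of_le haw] at hv
    simp only [min_eq_left hv.2]
    ring
  have integral_right : ∫ v in w..c, (min v w - v * w) * H' v
      = w * ((1 - c) * H c - (1 - w) * H w + ∫ v in w..c, H v) := by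
    have parts := integral_mul_deriv_eq_deriv_mul (fun x _ => (hasDerivAt_id x).const_sub 1)
      (fun x hx => hH x (hright hx)) intervalIntegrable_const (hH'.mono hright).intervalIntegrable
    simp only [id, neg_one_mul, integral_neg, sub_neg_eq_add] at parts
    rw [← parts, ← integral_const_mul]
    refine integral_congr fun v hv => ?_
    rw [uIcc_of_le hwc] at hv
    simp only [min_eq_right hv.1]
    ring
  have hsplit_kernel := integral_add_adjacent_intervals (μ := volume)
    (hintegrand.mono hleft).intervalIntegrable (hintegrand.mono hright).intervalIntegrable
  have hsplit_H := integral_add_adjacent_intervals (μ := volume)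
    (hHc.mono hleft).intervalIntegrable (hHc.mono hright).intervalIntegrable
  rw [← hsplit_kernel, integral_left, integral_right, ← hsplit_H]
  ring

theorem integral_integral_min_sub_mul_mul_deriv_mul_deriv (hac : a ≤ c)
    (hH : ∀ v ∈ Icc a c, HasDerivAt H (H' v) v) (hH' : ContinuousOn H' (Icc a c)) :
    ∫ w in a..c, ∫ v in a..c, (min v w - v * w) * H' v * H' w
      = a * H a ^ 2 + (1 - c) * H c ^ 2 + (∫ v in a..c, H v ^ 2)
        - (a * H a + (∫ v in a..c, H v) + (1 - c) * H c) ^ 2 := by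
  set Δ := a * H a + (∫ v in a..c, H v) + (1 - c) * H c
  set ψ : ℝ → ℝ := fun w => w * Δ - a * H a - ∫ v in a..w, H v
  have hHc : ContinuousOn H (Icc a c) := HasDerivAt.continuousOn hH
  have hHi : IntervalIntegrable H volume a c := hHc.intervalIntegrable_of_Icc hac
  have hinner : EqOn (fun w => ∫ v in a..c, (min v w - v * w) * H' v * H' w)
      (fun w => ψ w * H' w) (uIcc a c) := fun w hw => by
    rw [uIcc_of_le hac] at hw
    simp only [integral_mul_const, integral_min_sub_mul_mul_deriv hH hH' hw]
    rfl
  have hψ_deriv : ∀ x ∈ Icc a c, HasDerivWithinAt ψ (Δ - H x) (Icc a c) x := fun x hx => by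
    have := Fact.mk hx
    have hprimitive : HasDerivWithinAt (fun w => ∫ v in a..w, H v) (H x) (Icc a c) x :=
      integral_hasDerivWithinAt_right
        ((hHc.mono (Icc_subset_Icc_right hx.2)).intervalIntegrable_of_Icc hx.1)
        (hHc.stronglyMeasurableAtFilter_nhdsWithin measurableSet_Icc x) (hHc x hx)
    have h := (((hasDerivWithinAt_id x _).mul_const Δ).sub_const (a * H a)).sub hprimitive
    rwa [one_mul] at h
  have parts := integral_mul_deriv_eq_deriv_mul_of_hasDerivWithinAt (u := ψ) (v := H)
    (u' := fun x => Δ - H x) (by rwa [uIcc_of_le hac])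
    (by rw [uIcc_of_le hac]; exact fun x hx => (hH x hx).hasDerivWithinAt)
    (intervalIntegrable_const.sub hHi) (hH'.intervalIntegrable_of_Icc hac)
  have hsq : ∫ w in a..c, (Δ - H w) * H w = Δ * (∫ v in a..c, H v) - ∫ v in a..c, H v ^ 2 :=
    calc ∫ w in a..c, (Δ - H w) * H w = ∫ w in a..c, (Δ * H w - H w ^ 2) :=
          integral_congr fun w _ => by ring
      _ = Δ * (∫ v in a..c, H v) - ∫ v in a..c, H v ^ 2 := by
          rw [integral_sub (g := fun w => H w ^ 2) (hHi.const_mul Δ)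
            ((hHc.pow 2).intervalIntegrable_of_Icc hac), integral_const_mul]
  rw [integral_congr hinner, parts, hsq]
  simp only [ψ, integral_same]
  ring

end

theorem MTM_equal_trimming_variance (H H' : ℝ → ℝ)
    (hH : ∀ v ∈ Set.Icc (0:ℝ) 1, HasDerivAt H (H' v) v)
    (hH' : ContinuousOn H' (Set.Icc (0:ℝ) 1))
    (a b : ℝ) (ha : 0 ≤ a) (hab : a < 1 - b) (hb1 : 1 - b ≤ 1) :
    ∫ w in a..(1 - b), ∫ v in a..(1 - b), (min v w - v * w) * H' v * H' w
      = a * H a ^ 2 + b * H (1 - b) ^ 2 + (∫ v in a..(1 - b), H v ^ 2)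
        - (a * H a + (∫ v in a..(1 - b), H v) + b * H (1 - b)) ^ 2 := by
  have hsub : Icc a (1 - b) ⊆ Icc 0 1 := Icc_subset_Icc ha hb1
  have h := integral_integral_min_sub_mul_mul_deriv_mul_deriv hab.le
    (fun v hv => hH v (hsub hv)) (hH'.mono hsub)
  rwa [sub_sub_cancel] at h
end

section
/- Let g_i, g_j be integrable on [0,1] with (v,w) ↦ |g_i(v)g_j(w)| integrable on the relevant domains. Then ∫_0^1 (1/(1−u))² (∫_u^1 (1−v)g_i(v) dv)(∫_u^1 (1−w)g_j(w) dw) du = ∫_0^1 ∫_0^1 g_i(v) g_j(w) (min(v,w) − vw) dv dw. -/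
/-! Both sides are integrals of `(1 - u)⁻² (1 - v)(1 - w) gᵢ(v) gⱼ(w)` over the pyramid
`0 ≤ u ≤ min v w`, `(v, w) ∈ [0,1]²`. Integrating `(v, w)` first factors into the product of the
two inner integrals on the left; integrating `u` first gives `∫₀ᵐ (1 - u)⁻² du = m / (1 - m)`
with `m = min v w`, and `(1 - v)(1 - w) m / (1 - m) = min v w - v w`. Fubini on the pyramid
identifies the two, and it also makes the kernel integrable on the square, being a marginal of an
integrable function. -/

open intervalIntegral MeasureTheory Set

section PreimageProdMk

variable {α β E : Type*} [MeasurableSpace α] [MeasurableSpace β] {μ : Measure α} {ν : Measure β}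
  [NormedAddCommGroup E] [NormedSpace ℝ E] {s : Set (α × β)} {F : α × β → E}

theorem integral_indicator_prodMk_left (hs : MeasurableSet s) (x : α) :
    ∫ y, s.indicator F (x, y) ∂ν = ∫ y in Prod.mk x ⁻¹' s, F (x, y) ∂ν := by
  rw [← MeasureTheory.integral_indicator (measurable_prodMk_left hs)]
  exact integral_congr_ae (.of_forall fun y => (indicator_comp_right (Prod.mk x)).symm)

theorem integral_indicator_prodMk_right (hs : MeasurableSet s) (y : β) :
    ∫ x, s.indicator F (x, y) ∂μ = ∫ x in (·, y) ⁻¹' s, F (x, y) ∂μ := by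
  rw [← MeasureTheory.integral_indicator (measurable_prodMk_right hs)]
  exact integral_congr_ae (.of_forall fun x => (indicator_comp_right (·, y)).symm)

variable [SFinite μ] [SFinite ν]

theorem integral_integral_preimage_prodMk_swap (hs : MeasurableSet s)
    (hF : IntegrableOn F s (μ.prod ν)) :
    ∫ x, ∫ y in Prod.mk x ⁻¹' s, F (x, y) ∂ν ∂μ
      = ∫ y, ∫ x in (·, y) ⁻¹' s, F (x, y) ∂μ ∂ν := by
  simp_rw [← integral_indicator_prodMk_left hs, ← integral_indicator_prodMk_right hs]
  exact integral_integral_swap ((integrable_indicator_iff hs).2 hF)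

theorem MeasureTheory.IntegrableOn.integrable_integral_preimage_prodMk_right (hs : MeasurableSet s)
    (hF : IntegrableOn F s (μ.prod ν)) :
    Integrable (fun y => ∫ x in (·, y) ⁻¹' s, F (x, y) ∂μ) ν := by
  simp_rw [← integral_indicator_prodMk_right hs]
  exact ((integrable_indicator_iff hs).2 hF).integral_prod_right

end PreimageProdMk

def pyramid : Set (ℝ × ℝ × ℝ) :=
  {p | p.2.1 ∈ Icc 0 1 ∧ p.2.2 ∈ Icc 0 1 ∧ 0 ≤ p.1 ∧ p.1 ≤ min p.2.1 p.2.2}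

theorem measurableSet_pyramid : MeasurableSet pyramid := by
  unfold pyramid; measurability

theorem preimage_prodMk_pyramid {u : ℝ} (hu : u ∈ Icc (0 : ℝ) 1) :
    Prod.mk u ⁻¹' pyramid = Icc u 1 ×ˢ Icc u 1 := by
  ext ⟨v, w⟩
  simp only [pyramid, mem_preimage, mem_ofPred_eq, mem_prod, mem_Icc, le_min_iff] at hu ⊢
  constructor
  · rintro ⟨⟨-, hv⟩, ⟨-, hw⟩, -, huv, huw⟩; exact ⟨⟨huv, hv⟩, huw, hw⟩
  · rintro ⟨⟨huv, hv⟩, huw, hw⟩; exact ⟨⟨by linarith, hv⟩, ⟨by linarith, hw⟩, hu.1, huv, huw⟩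

theorem preimage_prodMk_pyramid_of_notMem {u : ℝ} (hu : u ∉ Icc (0 : ℝ) 1) :
    Prod.mk u ⁻¹' pyramid = ∅ := by
  refine eq_empty_of_forall_notMem fun _ ⟨⟨_, hv⟩, _, h0, hmin⟩ => hu ⟨h0, ?_⟩
  exact hmin.trans ((min_le_left _ _).trans hv)

theorem preimage_prodMk_right_pyramid {q : ℝ × ℝ} (hq : q ∈ Icc (0 : ℝ) 1 ×ˢ Icc (0 : ℝ) 1) :
    (·, q) ⁻¹' pyramid = Icc 0 (min q.1 q.2) := by
  ext u
  exact ⟨fun ⟨_, _, h0, h1⟩ => ⟨h0, h1⟩, fun ⟨h0, h1⟩ => ⟨hq.1, hq.2, h0, h1⟩⟩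

theorem preimage_prodMk_right_pyramid_of_notMem {q : ℝ × ℝ}
    (hq : q ∉ Icc (0 : ℝ) 1 ×ˢ Icc (0 : ℝ) 1) : (·, q) ⁻¹' pyramid = ∅ :=
  eq_empty_of_forall_notMem fun _ ⟨hv, hw, _⟩ => hq ⟨hv, hw⟩

section Pyramid

variable {F : ℝ × ℝ × ℝ → ℝ}

theorem setIntegral_pyramid_swap (hF : IntegrableOn F pyramid) :
    ∫ u in Icc 0 1, ∫ q in Icc u 1 ×ˢ Icc u 1, F (u, q)
      = ∫ q in Icc 0 1 ×ˢ Icc 0 1, ∫ u in Icc 0 (min q.1 q.2), F (u, q) := by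
  calc ∫ u in Icc 0 1, ∫ q in Icc u 1 ×ˢ Icc u 1, F (u, q)
      = ∫ u in Icc 0 1, ∫ q in Prod.mk u ⁻¹' pyramid, F (u, q) :=
        setIntegral_congr_fun measurableSet_Icc fun u hu => by rw [preimage_prodMk_pyramid hu]
    _ = ∫ u, ∫ q in Prod.mk u ⁻¹' pyramid, F (u, q) :=
        setIntegral_eq_integral_of_forall_compl_eq_zero fun u hu => by
          rw [preimage_prodMk_pyramid_of_notMem hu, Measure.restrict_empty, integral_zero_measure]
    _ = ∫ q : ℝ × ℝ, ∫ u in (·, q) ⁻¹' pyramid, F (u, q) := by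
        rw [Measure.volume_eq_prod ℝ (ℝ × ℝ)] at hF
        exact integral_integral_preimage_prodMk_swap measurableSet_pyramid hF
    _ = ∫ q in Icc 0 1 ×ˢ Icc 0 1, ∫ u in (·, q) ⁻¹' pyramid, F (u, q) :=
        (setIntegral_eq_integral_of_forall_compl_eq_zero fun q hq => by
          rw [preimage_prodMk_right_pyramid_of_notMem hq, Measure.restrict_empty,
            integral_zero_measure]).symm
    _ = ∫ q in Icc 0 1 ×ˢ Icc 0 1, ∫ u in Icc 0 (min q.1 q.2), F (u, q) :=
        setIntegral_congr_fun (measurableSet_Icc.prod measurableSet_Icc) fun q hq => by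
          rw [preimage_prodMk_right_pyramid hq]

theorem MeasureTheory.IntegrableOn.integrableOn_integral_pyramid (hF : IntegrableOn F pyramid) :
    IntegrableOn (fun q => ∫ u in Icc 0 (min q.1 q.2), F (u, q)) (Icc 0 1 ×ˢ Icc 0 1) := by
  rw [Measure.volume_eq_prod ℝ (ℝ × ℝ)] at hF
  refine (hF.integrable_integral_preimage_prodMk_right measurableSet_pyramid).integrableOn
    |>.congr_fun (fun q hq => ?_) (measurableSet_Icc.prod measurableSet_Icc)
  simp only [preimage_prodMk_right_pyramid hq]

end Pyramid

theorem integral_Icc_one_div_one_sub_sq {m : ℝ} (h0 : 0 ≤ m) (h1 : m < 1) :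
    ∫ u in Icc 0 m, (1 / (1 - u)) ^ 2 = m / (1 - m) := by
  have hne : ∀ u ∈ uIcc 0 m, 1 - u ≠ 0 := fun u hu => by
    rw [uIcc_of_le h0] at hu; linarith [hu.2]
  have hderiv : ∀ u ∈ uIcc 0 m, HasDerivAt (fun x => (1 - x)⁻¹) ((1 / (1 - u)) ^ 2) u :=
    fun u hu => (((hasDerivAt_id u).const_sub 1).inv (hne u hu)).congr_deriv (by simp)
  have hint : IntervalIntegrable (fun u => (1 / (1 - u)) ^ 2) volume 0 m :=
    ((continuousOn_const.div (continuousOn_const.sub continuousOn_id) hne).pow 2).intervalIntegrable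
  rw [integral_Icc_eq_integral_Ioc, ← integral_of_le h0, integral_eq_sub_of_hasDerivAt hderiv hint]
  have : 1 - m ≠ 0 := (sub_pos.2 h1).ne'
  field_simp
  ring

theorem integral_Icc_one_div_one_sub_sq_mul {v w : ℝ} (hv : v ∈ Icc (0 : ℝ) 1)
    (hw : w ∈ Icc (0 : ℝ) 1) :
    (∫ u in Icc 0 (min v w), (1 / (1 - u)) ^ 2) * ((1 - v) * (1 - w)) = min v w - v * w := by
  wlog hvw : v ≤ w generalizing v w
  · rw [min_comm, mul_comm (1 - v), mul_comm v]
    exact this hw hv (le_of_not_ge hvw)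
  rw [min_eq_left hvw]
  rcases hv.2.lt_or_eq with hv1 | rfl
  · rw [integral_Icc_one_div_one_sub_sq hv.1 hv1]
    field_simp [(sub_pos.2 hv1).ne']
  · -- the integral over `[0, 1]` diverges, but the factor `(1 - v) * (1 - w)` vanishes
    simp [le_antisymm hw.2 hvw]

theorem intervalIntegral_eq_setIntegral_Icc {E : Type*} [NormedAddCommGroup E] [NormedSpace ℝ E]
    {f : ℝ → E} {a b : ℝ} (hab : a ≤ b) : ∫ x in a..b, f x = ∫ x in Icc a b, f x := by
  rw [integral_of_le hab, integral_Icc_eq_integral_Ioc]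

theorem CGJ_eq_kernel_form_general (gi gj : ℝ → ℝ)
    (habs : IntegrableOn
      (fun p : ℝ × ℝ × ℝ =>
        (1 / (1 - p.1)) ^ 2 * ((1 - p.2.1) * (1 - p.2.2) * gi p.2.1 * gj p.2.2))
      {p : ℝ × ℝ × ℝ | p.2.1 ∈ Set.Icc (0:ℝ) 1 ∧ p.2.2 ∈ Set.Icc (0:ℝ) 1
        ∧ 0 ≤ p.1 ∧ p.1 ≤ min p.2.1 p.2.2} volume) :
    ∫ u in (0:ℝ)..1, (1 / (1 - u)) ^ 2
        * (∫ v in u..1, (1 - v) * gi v) * (∫ w in u..1, (1 - w) * gj w)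
      = ∫ v in (0:ℝ)..1, ∫ w in (0:ℝ)..1, gi v * gj w * (min v w - v * w) := by
  set F : ℝ × ℝ × ℝ → ℝ := fun p =>
    (1 / (1 - p.1)) ^ 2 * ((1 - p.2.1) * (1 - p.2.2) * gi p.2.1 * gj p.2.2)
  have hslice : ∀ u ∈ Icc (0 : ℝ) 1, (1 / (1 - u)) ^ 2
      * (∫ v in u..1, (1 - v) * gi v) * (∫ w in u..1, (1 - w) * gj w)
        = ∫ q in Icc u 1 ×ˢ Icc u 1, F (u, q) := fun u hu => by
    rw [intervalIntegral_eq_setIntegral_Icc hu.2, intervalIntegral_eq_setIntegral_Icc hu.2,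
      mul_assoc, Measure.volume_eq_prod, ← setIntegral_prod_mul,
      ← MeasureTheory.integral_const_mul]
    congr 1 with q
    ring
  have hkernel : EqOn (fun q => ∫ u in Icc 0 (min q.1 q.2), F (u, q))
      (fun q => gi q.1 * gj q.2 * (min q.1 q.2 - q.1 * q.2)) (Icc 0 1 ×ˢ Icc 0 1) :=
    fun q hq => by
      dsimp only
      rw [← integral_Icc_one_div_one_sub_sq_mul hq.1 hq.2, ← MeasureTheory.integral_mul_const,
        ← MeasureTheory.integral_const_mul]
      congr 1 with u
      ring
  have hint := habs.integrableOn_integral_pyramid.congr_fun hkernel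
    (measurableSet_Icc.prod measurableSet_Icc)
  rw [Measure.volume_eq_prod] at hint
  calc _ = ∫ u in Icc 0 1, ∫ q in Icc u 1 ×ˢ Icc u 1, F (u, q) := by
        rw [intervalIntegral_eq_setIntegral_Icc zero_le_one]
        exact setIntegral_congr_fun measurableSet_Icc hslice
    _ = ∫ q in Icc 0 1 ×ˢ Icc 0 1, ∫ u in Icc 0 (min q.1 q.2), F (u, q) :=
        setIntegral_pyramid_swap habs
    _ = ∫ q in Icc 0 1 ×ˢ Icc 0 1, gi q.1 * gj q.2 * (min q.1 q.2 - q.1 * q.2) :=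
        setIntegral_congr_fun (measurableSet_Icc.prod measurableSet_Icc) hkernel
    _ = _ := by
        rw [Measure.volume_eq_prod, setIntegral_prod _ hint]
        simp only [intervalIntegral_eq_setIntegral_Icc zero_le_one]

theorem CGJ_eq_kernel_form (gi gj : ℝ → ℝ)
    (hgi : IntervalIntegrable gi volume 0 1)
    (hgj : IntervalIntegrable gj volume 0 1)
    (habs : IntegrableOn
      (fun p : ℝ × ℝ × ℝ =>
        (1 / (1 - p.1)) ^ 2 * ((1 - p.2.1) * (1 - p.2.2) * gi p.2.1 * gj p.2.2))
      {p : ℝ × ℝ × ℝ | p.2.1 ∈ Set.Icc (0:ℝ) 1 ∧ p.2.2 ∈ Set.Icc (0:ℝ) 1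
        ∧ 0 ≤ p.1 ∧ p.1 ≤ min p.2.1 p.2.2} volume) :
    ∫ u in (0:ℝ)..1, (1 / (1 - u)) ^ 2
        * (∫ v in u..1, (1 - v) * gi v) * (∫ w in u..1, (1 - w) * gj w)
      = ∫ v in (0:ℝ)..1, ∫ w in (0:ℝ)..1, gi v * gj w * (min v w - v * w) :=
  CGJ_eq_kernel_form_general gi gj habs
end
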